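/- arXiv:math/0308273 — 16 statements merged into one kernel-verified Lean document; each statement's English description precedes it below -/
import Mathlib

section
/- Let H be an inner product space over ℝ or ℂ, and let x, a ∈ H, r > 0 with ‖x − a‖ ≤ r. If ‖a‖ > r, then ‖x‖²‖a‖² − (Re⟨x,a⟩)² ≤ r²‖x‖². -/
open scoped InnerProductSpace ComplexConjugate

theorem stmt_0 {𝕜 E : Type*} [RCLike 𝕜] [NormedAddCommGroup E] [InnerProductSpace 𝕜 E]
    (x a : E) (r : ℝ) (hr : 0 < r) (hx : ‖x - a‖ ≤ r) (ha : r < ‖a‖) :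
    ‖x‖ ^ 2 * ‖a‖ ^ 2 - (RCLike.re (⟪x, a⟫_𝕜)) ^ 2 ≤ r ^ 2 * ‖x‖ ^ 2 := by
  have h := @norm_sub_sq 𝕜 E _ _ _ x a
  have h2 : ‖x - a‖ ^ 2 ≤ r ^ 2 := by
    have := norm_nonneg (x - a)
    nlinarith
  set t := RCLike.re (⟪x, a⟫_𝕜) with ht
  have h3 : ‖x‖ ^ 2 + (‖a‖ ^ 2 - r ^ 2) ≤ 2 * t := by nlinarith
  have h4 : 0 ≤ ‖x‖ ^ 2 + (‖a‖ ^ 2 - r ^ 2) := by nlinarith [sq_nonneg ‖x‖]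
  nlinarith [mul_nonneg (by linarith : (0:ℝ) ≤ 2 * t - (‖x‖ ^ 2 + (‖a‖ ^ 2 - r ^ 2))) (by linarith : (0:ℝ) ≤ 2 * t + (‖x‖ ^ 2 + (‖a‖ ^ 2 - r ^ 2))), sq_nonneg (‖x‖ ^ 2 - (‖a‖ ^ 2 - r ^ 2))]
end

section
/- Let H be an inner product space over ℝ or ℂ, and let x, a ∈ H, r > 0 with ‖x − a‖ ≤ r. If ‖a‖ > r, then ‖x‖·√(‖a‖² − r²) ≤ Re⟨x,a⟩. -/
open scoped InnerProductSpace ComplexConjugate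

theorem stmt_1 {𝕜 E : Type*} [RCLike 𝕜] [NormedAddCommGroup E] [InnerProductSpace 𝕜 E]
    (x a : E) (r : ℝ) (hr : 0 < r) (hx : ‖x - a‖ ≤ r) (ha : r < ‖a‖) :
    ‖x‖ * Real.sqrt (‖a‖ ^ 2 - r ^ 2) ≤ RCLike.re (⟪x, a⟫_𝕜) := by
  have hc : (0:ℝ) ≤ ‖a‖ ^ 2 - r ^ 2 := by nlinarith
  set s := Real.sqrt (‖a‖ ^ 2 - r ^ 2) with hs
  have hs2 : s ^ 2 = ‖a‖ ^ 2 - r ^ 2 := Real.sq_sqrt hc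
  have hsq : ‖x - a‖ ^ 2 ≤ r ^ 2 := by
    have := norm_nonneg (x - a); nlinarith
  have hexp : ‖x - a‖ ^ 2 = ‖x‖ ^ 2 - 2 * RCLike.re (⟪x, a⟫_𝕜) + ‖a‖ ^ 2 :=
    @norm_sub_sq 𝕜 E _ _ _ x a
  nlinarith [sq_nonneg (‖x‖ - s), norm_nonneg x, Real.sqrt_nonneg (‖a‖ ^ 2 - r ^ 2)]
end

section
/- The constant 1 in the inequality ‖x‖²‖a‖² − (Re⟨x,a⟩)² ≤ C·r²‖x‖² (valid for all x in the closed ball of radius r around a, when ‖a‖ > r) is best possible: for every C < 1 there exist an inner product space H, vectors x, a ∈ H and r > 0 with ‖x − a‖ ≤ r < ‖a‖ such that ‖x‖²‖a‖² − (Re⟨x,a⟩)² > C·r²‖x‖². -/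
/-! Take `a` a unit vector and `x = a + r • u` with `u` a unit vector orthogonal to `a`. Then
`‖x - a‖ = r < 1 = ‖a‖`, and by Pythagoras the left-hand side `‖x‖²‖a‖² - ⟪x, a⟫²` equals
`r²`, while the right-hand side is `C r² (1 + r²)`; this is smaller once `C (1 + r²) < 1`,
which holds for all small `r > 0` because `C < 1`. -/

open scoped InnerProductSpace RealInnerProductSpace

open Filter Topology

section Gram

variable {E : Type*} [NormedAddCommGroup E] [InnerProductSpace ℝ E]

theorem norm_sq_mul_norm_sq_sub_inner_sq_of_inner_sub_eq_zero {x a : E}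
    (h : ⟪x - a, a⟫_ℝ = 0) :
    ‖x‖ ^ 2 * ‖a‖ ^ 2 - ⟪x, a⟫_ℝ ^ 2 = ‖x - a‖ ^ 2 * ‖a‖ ^ 2 := by
  have h_inner : ⟪x, a⟫_ℝ = ‖a‖ ^ 2 := by
    rwa [inner_sub_left, real_inner_self_eq_norm_sq, sub_eq_zero] at h
  have h_pythagoras : ‖x‖ ^ 2 = ‖x - a‖ ^ 2 + ‖a‖ ^ 2 := by
    rw [← sub_add_cancel x a, norm_add_sq_real, h, add_sub_cancel_right]
    ring
  rw [h_inner, h_pythagoras]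
  ring

theorem lt_norm_sq_mul_norm_sq_sub_inner_sq_add_smul {a u : E} (ha : ‖a‖ = 1) (hu : ‖u‖ = 1)
    (hua : ⟪u, a⟫_ℝ = 0) {C r : ℝ} (hr : 0 < r) (hCr : C * (1 + r ^ 2) < 1) :
    C * (r ^ 2 * ‖a + r • u‖ ^ 2) < ‖a + r • u‖ ^ 2 * ‖a‖ ^ 2 - ⟪a + r • u, a⟫_ℝ ^ 2 := by
  have h_perp : ⟪a, r • u⟫_ℝ = 0 := by
    rw [real_inner_smul_right, real_inner_comm, hua, mul_zero]
  have h_norm_smul : ‖r • u‖ = r := by rw [norm_smul, hu, mul_one, Real.norm_of_nonneg hr.le]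
  have h_norm_sq : ‖a + r • u‖ ^ 2 = 1 + r ^ 2 := by
    rw [norm_add_sq_real, h_perp, h_norm_smul, ha]
    ring
  have h_orth : ⟪a + r • u - a, a⟫_ℝ = 0 := by rwa [add_sub_cancel_left, real_inner_comm]
  rw [norm_sq_mul_norm_sq_sub_inner_sq_of_inner_sub_eq_zero h_orth, add_sub_cancel_left,
    h_norm_smul, ha, h_norm_sq]
  linarith [mul_lt_mul_of_pos_left hCr (pow_pos hr 2)]

end Gram

theorem exists_pos_lt_one_mul_one_add_sq_lt_one {C : ℝ} (hC : C < 1) :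
    ∃ r : ℝ, 0 < r ∧ r < 1 ∧ C * (1 + r ^ 2) < 1 := by
  have h_cont : ContinuousAt (fun r : ℝ => C * (1 + r ^ 2)) 0 := by fun_prop
  have h_small : ∀ᶠ r in 𝓝 (0 : ℝ), r < 1 ∧ C * (1 + r ^ 2) < 1 :=
    (eventually_lt_nhds zero_lt_one).and
      (h_cont.eventually_lt continuousAt_const (by simpa using hC))
  obtain ⟨r, ⟨hr1, hCr⟩, hr0⟩ :=
    ((h_small.filter_mono nhdsWithin_le_nhds).and (self_mem_nhdsWithin (s := Set.Ioi 0))).exists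
  exact ⟨r, hr0, hr1, hCr⟩

theorem stmt_4 (C : ℝ) (hC : C < 1) :
    ∃ (x a : EuclideanSpace ℝ (Fin 2)) (r : ℝ), 0 < r ∧ ‖x - a‖ ≤ r ∧ r < ‖a‖ ∧
      C * (r ^ 2 * ‖x‖ ^ 2) < ‖x‖ ^ 2 * ‖a‖ ^ 2 - (⟪x, a⟫_ℝ) ^ 2 := by
  obtain ⟨r, hr0, hr1, hCr⟩ := exists_pos_lt_one_mul_one_add_sq_lt_one hC
  have h_on := EuclideanSpace.orthonormal_single (𝕜 := ℝ) (ι := Fin 2)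
  set a := EuclideanSpace.single (0 : Fin 2) (1 : ℝ)
  set u := EuclideanSpace.single (1 : Fin 2) (1 : ℝ)
  have ha : ‖a‖ = 1 := h_on.1 0
  have hu : ‖u‖ = 1 := h_on.1 1
  refine ⟨a + r • u, a, r, hr0, ?_, ha ▸ hr1,
    lt_norm_sq_mul_norm_sq_sub_inner_sq_add_smul ha hu (h_on.2 (by decide)) hr0 hCr⟩
  rw [add_sub_cancel_left, norm_smul, hu, mul_one, Real.norm_of_nonneg hr0.le]
end

section
/- Let H be an inner product space over ℂ, x, y ∈ H, and γ, Γ ∈ ℂ with Re(Γ·conj(γ)) > 0. If Re⟨Γy − x, x − γy⟩ ≥ 0, then ‖x‖²‖y‖² ≤ (1/4)·(Re[(conj(Γ)+conj(γ))⟨x,y⟩])² / Re(Γ·conj(γ)). -/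
open scoped InnerProductSpace ComplexConjugate

theorem stmt_5 {E : Type*} [NormedAddCommGroup E] [InnerProductSpace ℂ E]
    (x y : E) (γ Γ : ℂ) (hΓγ : 0 < (Γ * conj γ).re)
    (h : 0 ≤ (⟪Γ • y - x, x - γ • y⟫_ℂ).re) :
    ‖x‖ ^ 2 * ‖y‖ ^ 2 ≤
      (1 / 4) * (((conj Γ + conj γ) * ⟪y, x⟫_ℂ).re) ^ 2 / (Γ * conj γ).re := by
  have hx : (⟪x, x⟫_ℂ).re = ‖x‖ ^ 2 := by
    rw [inner_self_eq_norm_sq_to_K]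
    norm_cast
  have hy : (⟪y, y⟫_ℂ).re = ‖y‖ ^ 2 := by
    rw [inner_self_eq_norm_sq_to_K]
    norm_cast
  have hconj : (⟪x, y⟫_ℂ).re = (⟪y, x⟫_ℂ).re := by
    rw [← inner_conj_symm x y, Complex.conj_re]
  have hconj' : (⟪x, y⟫_ℂ).im = -(⟪y, x⟫_ℂ).im := by
    rw [← inner_conj_symm x y, Complex.conj_im]
  have him : (⟪x, x⟫_ℂ).im = 0 := by
    have : (⟪x, x⟫_ℂ).im = -(⟪x, x⟫_ℂ).im := by
      conv_lhs => rw [← inner_conj_symm x x, Complex.conj_im]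
    linarith
  have him' : (⟪y, y⟫_ℂ).im = 0 := by
    have : (⟪y, y⟫_ℂ).im = -(⟪y, y⟫_ℂ).im := by
      conv_lhs => rw [← inner_conj_symm y y, Complex.conj_im]
    linarith
  set A := ‖x‖ ^ 2 with hA
  set B := ‖y‖ ^ 2 with hB
  set d := (Γ * conj γ).re with hd
  set s := (((conj Γ + conj γ) * ⟪y, x⟫_ℂ).re) with hs
  have key : A + d * B ≤ s := by
    rw [hs, hd]
    simp only [inner_sub_left, inner_sub_right, inner_smul_left, inner_smul_right,
      Complex.sub_re, Complex.add_re, Complex.mul_re, Complex.sub_im, Complex.add_im,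
      Complex.mul_im, Complex.conj_re, Complex.conj_im, hx, hy, hconj, hconj',
      him, him'] at h ⊢
    nlinarith [h]
  have hA0 : 0 ≤ A := by positivity
  have hB0 : 0 ≤ B := by positivity
  have hs0 : 0 ≤ s := le_trans (by nlinarith) key
  rw [le_div_iff₀ hΓγ]
  nlinarith [sq_nonneg (A - d * B), mul_le_mul key key (by nlinarith) hs0]
end

section
/- Let H be an inner product space over ℂ, x, y ∈ H, and γ, Γ ∈ ℂ with Re(Γ·conj(γ)) > 0. If Re⟨Γy − x, x − γy⟩ ≥ 0, then ‖x‖²‖y‖² ≤ (1/4)·(|Γ + γ|² / Re(Γ·conj(γ)))·|⟨x,y⟩|². -/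
/-!
Expanding the hypothesis gives `‖x‖² + Re(Γγ̄)‖y‖² ≤ Re((Γ + γ)⟪x, y⟫) ≤ ‖Γ + γ‖‖⟪x, y⟫‖`,
and by AM–GM `4 Re(Γγ̄)‖x‖²‖y‖²` is at most the square of the left-hand side.
-/

open scoped InnerProductSpace ComplexConjugate

theorem re_inner_smul_sub_sub_smul {𝕜 E : Type*} [RCLike 𝕜] [NormedAddCommGroup E]
    [InnerProductSpace 𝕜 E] (x y : E) (γ Γ : 𝕜) :
    RCLike.re ⟪Γ • y - x, x - γ • y⟫_𝕜 =
      RCLike.re ((Γ + γ) * ⟪x, y⟫_𝕜) - ‖x‖ ^ 2 - RCLike.re (Γ * conj γ) * ‖y‖ ^ 2 := by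
  have hcross : RCLike.re (conj Γ * ⟪y, x⟫_𝕜) = RCLike.re (Γ * ⟪x, y⟫_𝕜) := by
    rw [← inner_conj_symm, ← map_mul, RCLike.conj_re]
  have hquad : RCLike.re (conj Γ * (γ * ⟪y, y⟫_𝕜)) = RCLike.re (Γ * conj γ) * ‖y‖ ^ 2 := by
    rw [inner_self_eq_norm_sq_to_K, ← mul_assoc, ← RCLike.ofReal_pow, RCLike.re_mul_ofReal,
      ← RCLike.conj_re, map_mul, RCLike.conj_conj]
  rw [inner_sub_left, inner_sub_right, inner_sub_right, inner_smul_left, inner_smul_left,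
    inner_smul_right, inner_smul_right, map_sub, map_sub, map_sub, hcross, hquad,
    inner_self_eq_norm_sq, add_mul, map_add]
  ring

theorem mul_le_sq_div_of_add_mul_le {a b c M : ℝ} (ha : 0 ≤ a) (hb : 0 ≤ b) (hc : 0 < c)
    (h : a + c * b ≤ M) : a * b ≤ M ^ 2 / (4 * c) := by
  rw [le_div_iff₀ (by positivity)]
  calc a * b * (4 * c) = 4 * a * (c * b) := by ring
    _ ≤ (a + c * b) ^ 2 := four_mul_le_sq_add a (c * b)
    _ ≤ M ^ 2 := pow_le_pow_left₀ (by positivity) h 2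

theorem stmt_6 {E : Type*} [NormedAddCommGroup E] [InnerProductSpace ℂ E]
    (x y : E) (γ Γ : ℂ) (hΓγ : 0 < (Γ * conj γ).re)
    (h : 0 ≤ (⟪Γ • y - x, x - γ • y⟫_ℂ).re) :
    ‖x‖ ^ 2 * ‖y‖ ^ 2 ≤
      (1 / 4) * (‖Γ + γ‖ ^ 2 / (Γ * conj γ).re) * ‖⟪x, y⟫_ℂ‖ ^ 2 := by
  have hsum : ‖x‖ ^ 2 + (Γ * conj γ).re * ‖y‖ ^ 2 ≤ ‖Γ + γ‖ * ‖⟪x, y⟫_ℂ‖ := by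
    have hre := Complex.re_le_norm ((Γ + γ) * ⟪x, y⟫_ℂ)
    rw [norm_mul] at hre
    have hid := re_inner_smul_sub_sub_smul x y γ Γ
    simp only [RCLike.re_to_complex] at hid
    linarith
  calc ‖x‖ ^ 2 * ‖y‖ ^ 2 ≤ (‖Γ + γ‖ * ‖⟪x, y⟫_ℂ‖) ^ 2 / (4 * (Γ * conj γ).re) :=
        mul_le_sq_div_of_add_mul_le (by positivity) (by positivity) hΓγ hsum
    _ = _ := by ring
end

section
/- In an inner product space H, for x, y ∈ H and scalars γ, Γ, the condition Re⟨Γy − x, x − γy⟩ ≥ 0 is equivalent to ‖x − ((Γ+γ)/2)·y‖ ≤ (1/2)|Γ − γ|·‖y‖. -/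
open scoped InnerProductSpace ComplexConjugate

theorem stmt_7 {𝕜 E : Type*} [RCLike 𝕜] [NormedAddCommGroup E] [InnerProductSpace 𝕜 E]
    (x y : E) (γ Γ : 𝕜) :
    0 ≤ RCLike.re (⟪Γ • y - x, x - γ • y⟫_𝕜) ↔
      ‖x - ((Γ + γ) / 2) • y‖ ≤ (1 / 2) * ‖Γ - γ‖ * ‖y‖ := by
  set u := x - ((Γ + γ) / 2) • y with hu
  set d := ((Γ - γ) / 2) • y with hd
  have h1 : Γ • y - x = d - u := by rw [hu, hd]; module
  have h2 : x - γ • y = u + d := by rw [hu, hd]; module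
  have hdn : ‖d‖ = (1 / 2) * ‖Γ - γ‖ * ‖y‖ := by
    rw [hd, norm_smul, norm_div, RCLike.norm_ofNat]
    ring
  have key : RCLike.re (⟪Γ • y - x, x - γ • y⟫_𝕜) = ‖d‖ ^ 2 - ‖u‖ ^ 2 := by
    rw [h1, h2, inner_sub_left, inner_add_right, inner_add_right, map_sub, map_add, map_add]
    have := inner_mul_symm_re_eq_norm (𝕜 := 𝕜) d u
    rw [← @inner_self_eq_norm_sq 𝕜, ← @inner_self_eq_norm_sq 𝕜]
    have hsym : RCLike.re (⟪d, u⟫_𝕜) = RCLike.re (⟪u, d⟫_𝕜) := inner_re_symm _ _ 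
    ring_nf
    rw [hsym]
    ring
  rw [key, sub_nonneg, ← hdn]
  exact pow_le_pow_iff_left₀ (norm_nonneg _) (norm_nonneg _) two_ne_zero
end

section
/- Let H be an inner product space over ℂ, x, y ∈ H, γ, Γ ∈ ℂ with Re(Γ·conj(γ)) = 0. If Re⟨Γy − x, x − γy⟩ ≥ 0, then ‖x‖² ≤ Re[(conj(Γ)+conj(γ))⟨x,y⟩]. -/
open scoped InnerProductSpace ComplexConjugate

theorem stmt_8 {E : Type*} [NormedAddCommGroup E] [InnerProductSpace ℂ E]
    (x y : E) (γ Γ : ℂ) (hΓγ : (Γ * conj γ).re = 0)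
    (h : 0 ≤ (⟪Γ • y - x, x - γ • y⟫_ℂ).re) :
    ‖x‖ ^ 2 ≤ ((conj Γ + conj γ) * ⟪y, x⟫_ℂ).re := by
  simp only [inner_sub_left, inner_sub_right, inner_smul_left, inner_smul_right] at h
  have hxx : (⟪x, x⟫_ℂ).re = ‖x‖ ^ 2 := by
    rw [inner_self_eq_norm_sq_to_K]; norm_cast
  have hyx : ⟪x, y⟫_ℂ = conj ⟪y, x⟫_ℂ := by rw [inner_conj_symm]
  have hyy : (⟪y, y⟫_ℂ).im = 0 := by
    rw [inner_self_eq_norm_sq_to_K]; norm_cast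
  simp only [Complex.mul_re, Complex.conj_re, Complex.conj_im] at hΓγ
  simp only [hyx, Complex.sub_re, Complex.sub_im, Complex.add_re, Complex.add_im,
    Complex.mul_re, Complex.mul_im, Complex.conj_re, Complex.conj_im, hyy] at h ⊢
  have hc : (Γ.re * γ.re - Γ.im * -γ.im) * (⟪y, y⟫_ℂ).re = 0 := by rw [hΓγ]; ring
  nlinarith [hxx, h, hc]
end

section
/- Let H be an inner product space over ℂ, x, y ∈ H, γ, Γ ∈ ℂ with Re(Γ·conj(γ)) < 0. If Re⟨Γy − x, x − γy⟩ ≥ 0, then ‖x‖² ≤ −Re(Γ·conj(γ))·‖y‖² + Re[(conj(Γ)+conj(γ))⟨x,y⟩]. -/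
open scoped InnerProductSpace ComplexConjugate

theorem stmt_9 {E : Type*} [NormedAddCommGroup E] [InnerProductSpace ℂ E]
    (x y : E) (γ Γ : ℂ) (hΓγ : (Γ * conj γ).re < 0)
    (h : 0 ≤ (⟪Γ • y - x, x - γ • y⟫_ℂ).re) :
    ‖x‖ ^ 2 ≤ -(Γ * conj γ).re * ‖y‖ ^ 2 + ((conj Γ + conj γ) * ⟪y, x⟫_ℂ).re := by
  have hxy : ⟪x, y⟫_ℂ = conj ⟪y, x⟫_ℂ := (inner_conj_symm _ _).symm
  have hxx : (⟪x, x⟫_ℂ).re = ‖x‖ ^ 2 := inner_self_eq_norm_sq (𝕜 := ℂ) x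
  have hyy : (⟪y, y⟫_ℂ).re = ‖y‖ ^ 2 := inner_self_eq_norm_sq (𝕜 := ℂ) y
  have hx0 : (⟪x, x⟫_ℂ).im = 0 := inner_self_im (𝕜 := ℂ) x
  have hy0 : (⟪y, y⟫_ℂ).im = 0 := inner_self_im (𝕜 := ℂ) y
  simp only [inner_sub_left, inner_sub_right, inner_smul_left, inner_smul_right, hxy,
    Complex.sub_re, Complex.add_re, Complex.mul_re, Complex.sub_im, Complex.add_im,
    Complex.mul_im, Complex.conj_re, Complex.conj_im, hx0, hy0, hxx, hyy] at h ⊢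
  linarith [h]
end

section
/- Let H be an inner product space over ℝ or ℂ and x, a ∈ H, r > 0 with ‖x − a‖ ≤ r < ‖a‖. Then ‖x‖ + ‖a‖ − ‖x + a‖ ≤ √2·r·√( Re⟨x,a⟩ / (√(‖a‖² − r²)·(√(‖a‖² − r²) + ‖a‖)) ). -/
open scoped InnerProductSpace ComplexConjugate

theorem stmt_11 {𝕜 E : Type*} [RCLike 𝕜] [NormedAddCommGroup E] [InnerProductSpace 𝕜 E]
    (x a : E) (r : ℝ) (hr : 0 < r) (hx : ‖x - a‖ ≤ r) (ha : r < ‖a‖) :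
    ‖x‖ + ‖a‖ - ‖x + a‖ ≤
      Real.sqrt 2 * r * Real.sqrt (RCLike.re (⟪x, a⟫_𝕜) /
        (Real.sqrt (‖a‖ ^ 2 - r ^ 2) * (Real.sqrt (‖a‖ ^ 2 - r ^ 2) + ‖a‖))) := by
  set n := ‖x‖ with hn
  set A := ‖a‖ with hA'
  set t := RCLike.re (⟪x, a⟫_𝕜) with htdef
  set s := Real.sqrt (A ^ 2 - r ^ 2) with hsdef
  have hA : 0 < A := lt_trans hr ha
  have hr2 : 0 < A ^ 2 - r ^ 2 := by nlinarith
  have hs0 : 0 < s := Real.sqrt_pos.mpr hr2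
  have hs2 : s ^ 2 = A ^ 2 - r ^ 2 := Real.sq_sqrt hr2.le
  have hsA : s < A := by nlinarith
  have hn0 : 0 ≤ n := norm_nonneg x
  have hsub : ‖x - a‖ ^ 2 = n ^ 2 - 2 * t + A ^ 2 := norm_sub_sq x a
  have hadd : ‖x + a‖ ^ 2 = n ^ 2 + 2 * t + A ^ 2 := norm_add_sq x a
  have hxr : ‖x - a‖ ^ 2 ≤ r ^ 2 := by
    have := norm_nonneg (x - a); nlinarith
  have h2t : n ^ 2 + s ^ 2 ≤ 2 * t := by nlinarith
  have ht : n * s ≤ t := by nlinarith [sq_nonneg (n - s)]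
  have ht0 : 0 ≤ t := le_trans (by positivity) ht
  have hD : 0 < s * (s + A) := by positivity
  have hq : 0 ≤ t / (s * (s + A)) := by positivity
  have htri : ‖x + a‖ ≤ n + A := norm_add_le x a
  have h1 : (n + A - ‖x + a‖) ^ 2 ≤ 2 * (n * A - t) := by
    nlinarith [norm_nonneg (x + a)]
  have h2 : (n * A - t) * (s * (s + A)) ≤ r ^ 2 * t := by
    nlinarith [mul_nonneg (sub_nonneg.2 ht) hD.le, mul_nonneg (sub_nonneg.2 ht) (sq_nonneg r)]
  have h3 : n * A - t ≤ r ^ 2 * t / (s * (s + A)) := by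
    rw [le_div_iff₀ hD]; exact h2
  have key : (n + A - ‖x + a‖) ^ 2 ≤ 2 * r ^ 2 * (t / (s * (s + A))) := by
    have : 2 * r ^ 2 * (t / (s * (s + A))) = 2 * (r ^ 2 * t / (s * (s + A))) := by ring
    rw [this]; linarith
  have hL0 : 0 ≤ n + A - ‖x + a‖ := by linarith
  have hrw : Real.sqrt 2 * r * Real.sqrt (t / (s * (s + A)))
      = Real.sqrt (2 * r ^ 2 * (t / (s * (s + A)))) := by
    rw [Real.sqrt_mul (by positivity), Real.sqrt_mul (by norm_num),
      Real.sqrt_sq hr.le]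
  rw [hrw]
  exact (Real.le_sqrt hL0 (by positivity)).mpr key
end

section
/- Let H be an inner product space over ℝ or ℂ, x, y ∈ H, and real numbers M > m > 0 such that Re⟨My − x, x − my⟩ ≥ 0. Then 0 ≤ ‖x‖‖y‖ − Re⟨x,y⟩ ≤ ((√M − √m)²/(2√(mM)))·Re⟨x,y⟩. -/
open scoped InnerProductSpace ComplexConjugate

theorem stmt_12 {𝕜 E : Type*} [RCLike 𝕜] [NormedAddCommGroup E] [InnerProductSpace 𝕜 E]
    (x y : E) (M m : ℝ) (hm : 0 < m) (hM : m < M)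
    (h : 0 ≤ RCLike.re (⟪(M : 𝕜) • y - x, x - (m : 𝕜) • y⟫_𝕜)) :
    0 ≤ ‖x‖ * ‖y‖ - RCLike.re (⟪x, y⟫_𝕜) ∧
      ‖x‖ * ‖y‖ - RCLike.re (⟪x, y⟫_𝕜) ≤
        ((Real.sqrt M - Real.sqrt m) ^ 2 / (2 * Real.sqrt (m * M))) * RCLike.re (⟪x, y⟫_𝕜) := by
  have hcs : RCLike.re (⟪x, y⟫_𝕜) ≤ ‖x‖ * ‖y‖ := re_inner_le_norm (𝕜 := 𝕜) x y
  have key : ‖x‖ ^ 2 + m * M * ‖y‖ ^ 2 ≤ (M + m) * RCLike.re (⟪x, y⟫_𝕜) := by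
    have hsym : RCLike.re (⟪y, x⟫_𝕜) = RCLike.re (⟪x, y⟫_𝕜) := inner_re_symm ..
    simp only [inner_sub_left, inner_sub_right, inner_smul_left, inner_smul_right,
      RCLike.conj_ofReal, map_sub, RCLike.re_ofReal_mul, inner_self_eq_norm_sq,
      hsym] at h
    nlinarith [h]
  set sm := Real.sqrt m with hsm
  set sM := Real.sqrt M with hsM
  have hsm2 : sm ^ 2 = m := Real.sq_sqrt hm.le
  have hsM2 : sM ^ 2 = M := Real.sq_sqrt (hm.trans hM).le
  have hsmpos : 0 < sm := Real.sqrt_pos.mpr hm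
  have hsMpos : 0 < sM := Real.sqrt_pos.mpr (hm.trans hM)
  have hmul : Real.sqrt (m * M) = sm * sM := Real.sqrt_mul hm.le M
  have hsq : (sm * sM) ^ 2 = m * M := by rw [mul_pow, hsm2, hsM2]
  have hamgm : 2 * (sm * sM) * (‖x‖ * ‖y‖) ≤ ‖x‖ ^ 2 + m * M * ‖y‖ ^ 2 := by
    nlinarith [sq_nonneg (‖x‖ - sm * sM * ‖y‖), hsq]
  have hxy : 2 * (sm * sM) * (‖x‖ * ‖y‖) ≤ (M + m) * RCLike.re (⟪x, y⟫_𝕜) :=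
    hamgm.trans key
  have hpos : (0:ℝ) ≤ 2 * (sm * sM) * (‖x‖ * ‖y‖) := by positivity
  have hrepos : 0 ≤ RCLike.re (⟪x, y⟫_𝕜) := by
    nlinarith [hxy, hpos]
  refine ⟨by linarith, ?_⟩
  rw [hmul, div_mul_eq_mul_div, le_div_iff₀ (by positivity)]
  nlinarith [hxy]
end

section
/- Let H be an inner product space over ℝ or ℂ, x, y ∈ H, M > m > 0 with Re⟨My − x, x − my⟩ ≥ 0. Then 0 ≤ ‖x‖ + ‖y‖ − ‖x + y‖ ≤ ((√M − √m)/(mM)^{1/4})·√(Re⟨x,y⟩). -/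
open scoped InnerProductSpace ComplexConjugate

theorem stmt_13 {𝕜 E : Type*} [RCLike 𝕜] [NormedAddCommGroup E] [InnerProductSpace 𝕜 E]
    (x y : E) (M m : ℝ) (hm : 0 < m) (hM : m < M)
    (h : 0 ≤ RCLike.re (⟪(M : 𝕜) • y - x, x - (m : 𝕜) • y⟫_𝕜)) :
    0 ≤ ‖x‖ + ‖y‖ - ‖x + y‖ ∧
      ‖x‖ + ‖y‖ - ‖x + y‖ ≤
        ((Real.sqrt M - Real.sqrt m) / (m * M) ^ ((1 : ℝ) / 4)) *
          Real.sqrt (RCLike.re (⟪x, y⟫_𝕜)) := by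
  set r := RCLike.re (⟪x, y⟫_𝕜) with hr
  clear_value r
  have hM0 : (0:ℝ) < M := hm.trans hM
  have hmM : (0:ℝ) < m * M := mul_pos hm hM0
  have key : ‖x‖^2 + m*M*‖y‖^2 ≤ (M+m) * r := by
    simp only [inner_sub_left, inner_sub_right, inner_smul_left, inner_smul_right, map_sub, map_add,
      RCLike.conj_ofReal, RCLike.re_ofReal_mul, inner_self_eq_norm_sq] at h
    rw [inner_re_symm y x] at h
    nlinarith [h]
  have hrpos : 0 ≤ r := by
    nlinarith [sq_nonneg ‖x‖, sq_nonneg ‖y‖, key]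
  have hs : Real.sqrt (m*M) ^ 2 = m * M := Real.sq_sqrt hmM.le
  have hs0 : 0 < Real.sqrt (m*M) := Real.sqrt_pos.mpr hmM
  -- AM-GM + key
  have key2 : 2 * Real.sqrt (m*M) * (‖x‖ * ‖y‖) ≤ (M+m) * r := by
    nlinarith [sq_nonneg (‖x‖ - Real.sqrt (m*M) * ‖y‖), key]
  -- norm identity
  have hnorm : ‖x + y‖^2 = ‖x‖^2 + 2*r + ‖y‖^2 := by
    rw [hr, norm_add_sq (𝕜 := 𝕜)]
  set C := ((Real.sqrt M - Real.sqrt m) / (m * M) ^ ((1 : ℝ) / 4)) * Real.sqrt r with hC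
  clear_value C
  have hq : ((m * M) ^ ((1 : ℝ) / 4)) ^ 2 = Real.sqrt (m*M) := by
    rw [← Real.rpow_natCast ((m*M) ^ ((1:ℝ)/4)) 2, ← Real.rpow_mul hmM.le]
    norm_num
    rw [Real.sqrt_eq_rpow]
  have hq0 : 0 < (m * M) ^ ((1 : ℝ) / 4) := Real.rpow_pos_of_pos hmM _
  have hsm : Real.sqrt m ≤ Real.sqrt M := Real.sqrt_le_sqrt hM.le
  have hC0 : 0 ≤ C := by
    rw [hC]
    exact mul_nonneg (div_nonneg (by linarith) hq0.le) (Real.sqrt_nonneg _)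
  have hC2 : C^2 = (Real.sqrt M - Real.sqrt m)^2 / Real.sqrt (m*M) * r := by
    rw [hC, mul_pow, div_pow, hq, Real.sq_sqrt hrpos]
  have hMsq : Real.sqrt M ^ 2 = M := Real.sq_sqrt hM0.le
  have hmsq : Real.sqrt m ^ 2 = m := Real.sq_sqrt hm.le
  have hmulsqrt : Real.sqrt (m*M) = Real.sqrt m * Real.sqrt M := Real.sqrt_mul hm.le M
  -- (√M−√m)²/√(mM) * r ≥ 2‖x‖‖y‖ − 2r
  have key3 : 2 * (‖x‖ * ‖y‖) - 2 * r ≤ C^2 := by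
    rw [hC2]
    rw [div_mul_eq_mul_div, le_div_iff₀ hs0]
    nlinarith [key2, hmulsqrt, hMsq, hmsq, hrpos, hs]
  have hineq : (‖x‖ + ‖y‖)^2 ≤ (‖x + y‖ + C)^2 := by
    nlinarith [hnorm, key3, norm_nonneg (x+y), hC0]
  constructor
  · have := norm_add_le x y; linarith
  · have h1 : ‖x‖ + ‖y‖ ≤ ‖x + y‖ + C := by
      have h2 := Real.sqrt_le_sqrt hineq
      rwa [Real.sqrt_sq (by positivity), Real.sqrt_sq (by positivity)] at h2
    linarith
end

section
/- Let H be an inner product space over ℝ or ℂ, let x, y, e ∈ H with ‖e‖ = 1, and let r₁, r₂ ∈ (0,1) with ‖x − e‖ ≤ r₁ and ‖y − e‖ ≤ r₂. Then |⟨x,y⟩ − ⟨x,e⟩⟨e,y⟩| ≤ r₁r₂‖x‖‖y‖. -/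
/-! Subtracting `⟪x, e⟫ * ⟪e, y⟫` replaces `x` and `y` by their components orthogonal to the unit
vector `e`, so by Cauchy–Schwarz it suffices that `‖x - ⟪e, x⟫ • e‖ ≤ r * ‖x‖` whenever
`‖x - e‖ ≤ r`: a point of the ball of radius `r` about `e` makes an angle with `e` whose sine is
at most `r`. -/

open scoped InnerProductSpace

namespace InnerProductSpace

variable {𝕜 E : Type*} [RCLike 𝕜] [NormedAddCommGroup E] [InnerProductSpace 𝕜 E] {e : E}

lemma inner_sub_inner_mul_inner_of_norm_eq_one (he : ‖e‖ = 1) (x y : E) :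
    ⟪x, y⟫_𝕜 - ⟪x, e⟫_𝕜 * ⟪e, y⟫_𝕜 = ⟪x - ⟪e, x⟫_𝕜 • e, y - ⟪e, y⟫_𝕜 • e⟫_𝕜 := by
  have hee : ⟪e, e⟫_𝕜 = 1 := by simp [inner_self_eq_norm_sq_to_K, he]
  simp only [inner_sub_left, inner_sub_right, inner_smul_left, inner_smul_right,
    inner_conj_symm, hee, mul_one]
  ring

lemma norm_sub_inner_smul_sq_of_norm_eq_one (he : ‖e‖ = 1) (x : E) :
    ‖x - ⟪e, x⟫_𝕜 • e‖ ^ 2 = ‖x‖ ^ 2 - ‖⟪e, x⟫_𝕜‖ ^ 2 := by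
  rw [@norm_sub_sq 𝕜, inner_smul_right, ← inner_conj_symm, RCLike.conj_mul, norm_smul, he]
  norm_cast
  rw [RCLike.norm_conj]
  ring

lemma norm_sub_inner_smul_le_of_norm_sub_le (he : ‖e‖ = 1) {x : E} {r : ℝ}
    (hx : ‖x - e‖ ≤ r) : ‖x - ⟪e, x⟫_𝕜 • e‖ ≤ r * ‖x‖ := by
  have hr : 0 ≤ r := (norm_nonneg _).trans hx
  have hdist : ‖x‖ ^ 2 - 2 * RCLike.re ⟪x, e⟫_𝕜 + 1 ≤ r ^ 2 := by
    have h := @norm_sub_sq 𝕜 _ _ _ _ x e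
    rw [he, one_pow] at h
    rw [← h]
    gcongr
  have hre : RCLike.re ⟪x, e⟫_𝕜 ≤ ‖⟪e, x⟫_𝕜‖ := by
    rw [← norm_inner_symm]
    exact RCLike.re_le_norm _
  have hsq : ‖x - ⟪e, x⟫_𝕜 • e‖ ^ 2 ≤ (r * ‖x‖) ^ 2 := by
    rw [norm_sub_inner_smul_sq_of_norm_eq_one he]
    rcases le_or_gt 1 r with hr1 | hr1
    · nlinarith [sq_nonneg ‖⟪e, x⟫_𝕜‖, mul_le_mul_of_nonneg_right (one_le_pow₀ (n := 2) hr1)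
        (sq_nonneg ‖x‖)]
    · -- `2‖⟪e, x⟫‖ ≥ ‖x‖² + (1 - r²) ≥ 0`, and by AM–GM the square of the right side is at
      -- least `4‖x‖²(1 - r²)`
      have hlow : ‖x‖ ^ 2 + (1 - r ^ 2) ≤ 2 * ‖⟪e, x⟫_𝕜‖ := by linarith
      have hpos : 0 ≤ ‖x‖ ^ 2 + (1 - r ^ 2) := by nlinarith [sq_nonneg ‖x‖]
      nlinarith [mul_le_mul hlow hlow hpos (by positivity),
        sq_nonneg (‖x‖ ^ 2 - (1 - r ^ 2))]
  exact le_of_pow_le_pow_left₀ two_ne_zero (by positivity) hsq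

end InnerProductSpace

open InnerProductSpace in
theorem stmt_14_general {𝕜 E : Type*} [RCLike 𝕜] [NormedAddCommGroup E] [InnerProductSpace 𝕜 E]
    (x y e : E) (he : ‖e‖ = 1) (r₁ r₂ : ℝ) (hx : ‖x - e‖ ≤ r₁) (hy : ‖y - e‖ ≤ r₂) :
    ‖⟪x, y⟫_𝕜 - ⟪x, e⟫_𝕜 * ⟪e, y⟫_𝕜‖ ≤ r₁ * r₂ * ‖x‖ * ‖y‖ := by
  have hx' := norm_sub_inner_smul_le_of_norm_sub_le (𝕜 := 𝕜) he hx
  have hy' := norm_sub_inner_smul_le_of_norm_sub_le (𝕜 := 𝕜) he hy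
  rw [inner_sub_inner_mul_inner_of_norm_eq_one he]
  calc _ ≤ ‖x - ⟪e, x⟫_𝕜 • e‖ * ‖y - ⟪e, y⟫_𝕜 • e‖ := norm_inner_le_norm _ _
    _ ≤ (r₁ * ‖x‖) * (r₂ * ‖y‖) :=
      mul_le_mul hx' hy' (norm_nonneg _) ((norm_nonneg _).trans hx')
    _ = r₁ * r₂ * ‖x‖ * ‖y‖ := by ring

theorem stmt_14 {𝕜 E : Type*} [RCLike 𝕜] [NormedAddCommGroup E] [InnerProductSpace 𝕜 E]
    (x y e : E) (he : ‖e‖ = 1) (r₁ r₂ : ℝ) (hr₁ : r₁ ∈ Set.Ioo (0 : ℝ) 1)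
    (hr₂ : r₂ ∈ Set.Ioo (0 : ℝ) 1) (hx : ‖x - e‖ ≤ r₁) (hy : ‖y - e‖ ≤ r₂) :
    ‖⟪x, y⟫_𝕜 - ⟪x, e⟫_𝕜 * ⟪e, y⟫_𝕜‖ ≤ r₁ * r₂ * ‖x‖ * ‖y‖ :=
  stmt_14_general (𝕜 := 𝕜) x y e he r₁ r₂ hx hy
end

section
/- Let H be an inner product space over ℂ, x, y, e ∈ H with ‖e‖ = 1, and a, A, b, B ∈ ℂ with Re(A·conj(a)) > 0, Re(B·conj(b)) > 0. If Re⟨Ae − x, x − ae⟩ ≥ 0 and Re⟨Be − y, y − be⟩ ≥ 0, then |⟨x,y⟩ − ⟨x,e⟩⟨e,y⟩| ≤ (1/4)·(|A − a||B − b| / √(Re(A·conj(a))·Re(B·conj(b))))·|⟨x,e⟩⟨e,y⟩|. -/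
/-!
Write `x' = x - ⟪e, x⟫ e` and `y' = y - ⟪e, y⟫ e`. Since `‖e‖ = 1`, the left-hand side is
`‖⟪x', y'⟫‖ ≤ ‖x'‖ ‖y'‖`, so it suffices to bound `‖x'‖² = ‖x‖² - ‖⟪x, e⟫‖²`. Expanding the
hypothesis gives `‖x‖² ≤ Re((A + a) ⟪x, e⟫) - Re(A ā) ≤ ‖A + a‖ ‖⟪x, e⟫‖ - Re(A ā)`, and with
`‖A + a‖² = ‖A - a‖² + 4 Re(A ā)` the bound `4 Re(A ā) ‖x'‖² ≤ ‖A - a‖² ‖⟪x, e⟫‖²` reduces to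
`(‖A + a‖ ‖⟪x, e⟫‖ - 2 Re(A ā))² ≥ 0`.
-/

open scoped InnerProductSpace ComplexConjugate

lemma Complex.sq_norm_add_eq_sq_norm_sub_add (z w : ℂ) :
    ‖z + w‖ ^ 2 = ‖z - w‖ ^ 2 + 4 * (z * conj w).re := by
  rw [Complex.sq_norm, Complex.sq_norm, Complex.normSq_add, Complex.normSq_sub]
  ring

section

variable {E : Type*} [NormedAddCommGroup E] [InnerProductSpace ℂ E] {e : E}

lemma inner_sub_inner_smul_of_norm_eq_one (he : ‖e‖ = 1) (x y : E) :
    ⟪x - ⟪e, x⟫_ℂ • e, y - ⟪e, y⟫_ℂ • e⟫_ℂ = ⟪x, y⟫_ℂ - ⟪x, e⟫_ℂ * ⟪e, y⟫_ℂ := by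
  simp only [inner_sub_left, inner_sub_right, inner_smul_left, inner_smul_right,
    inner_self_eq_one_of_norm_eq_one he, inner_conj_symm]
  ring

lemma sq_norm_sub_inner_smul_of_norm_eq_one (he : ‖e‖ = 1) (x : E) :
    ‖x - ⟪e, x⟫_ℂ • e‖ ^ 2 = ‖x‖ ^ 2 - ‖⟪x, e⟫_ℂ‖ ^ 2 := by
  have h := inner_sub_inner_smul_of_norm_eq_one he x x
  rw [← inner_conj_symm x e, Complex.norm_conj]
  rw [← inner_conj_symm x e, inner_self_eq_norm_sq_to_K, inner_self_eq_norm_sq_to_K,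
    Complex.conj_mul'] at h
  exact Complex.ofReal_injective (by push_cast; exact h)

lemma re_inner_smul_sub_sub_smul_of_norm_eq_one (he : ‖e‖ = 1) (x : E) (a A : ℂ) :
    (⟪A • e - x, x - a • e⟫_ℂ).re = ((A + a) * ⟪x, e⟫_ℂ).re - (A * conj a).re - ‖x‖ ^ 2 := by
  have hxx : (⟪x, x⟫_ℂ).re = ‖x‖ ^ 2 := inner_self_eq_norm_sq (𝕜 := ℂ) x
  simp only [inner_sub_left, inner_sub_right, inner_smul_left, inner_smul_right,
    inner_self_eq_one_of_norm_eq_one he, ← inner_conj_symm x e, mul_one, hxx, Complex.sub_re,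
    Complex.mul_re, Complex.add_re, Complex.add_im, Complex.sub_im, Complex.conj_re,
    Complex.conj_im]
  ring

lemma sq_norm_sub_inner_smul_mul_le (he : ‖e‖ = 1) {x : E} {a A : ℂ}
    (hx : 0 ≤ (⟪A • e - x, x - a • e⟫_ℂ).re) :
    4 * (A * conj a).re * ‖x - ⟪e, x⟫_ℂ • e‖ ^ 2 ≤ (‖A - a‖ * ‖⟪x, e⟫_ℂ‖) ^ 2 := by
  have hre : ((A + a) * ⟪x, e⟫_ℂ).re ≤ ‖A + a‖ * ‖⟪x, e⟫_ℂ‖ :=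
    (Complex.re_le_norm _).trans (norm_mul _ _).le
  rw [re_inner_smul_sub_sub_smul_of_norm_eq_one he] at hx
  rcases le_or_gt (A * conj a).re 0 with hAa | hAa
  · exact (mul_nonpos_of_nonpos_of_nonneg (by linarith) (sq_nonneg _)).trans (sq_nonneg _)
  rw [sq_norm_sub_inner_smul_of_norm_eq_one he, mul_pow]
  nlinarith [Complex.sq_norm_add_eq_sq_norm_sub_add A a,
    sq_nonneg (‖A + a‖ * ‖⟪x, e⟫_ℂ‖ - 2 * (A * conj a).re)]

lemma norm_sub_inner_smul_le (he : ‖e‖ = 1) {x : E} {a A : ℂ} (hAa : 0 < (A * conj a).re)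
    (hx : 0 ≤ (⟪A • e - x, x - a • e⟫_ℂ).re) :
    ‖x - ⟪e, x⟫_ℂ • e‖ ≤ ‖A - a‖ / (2 * √(A * conj a).re) * ‖⟪x, e⟫_ℂ‖ := by
  rw [div_mul_eq_mul_div, le_div_iff₀ (by positivity), ← sq_le_sq₀ (by positivity)
    (by positivity), mul_pow, mul_pow, Real.sq_sqrt hAa.le]
  linarith [sq_norm_sub_inner_smul_mul_le he hx]

end

theorem stmt_15 {E : Type*} [NormedAddCommGroup E] [InnerProductSpace ℂ E]
    (x y e : E) (he : ‖e‖ = 1) (a A b B : ℂ)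
    (hAa : 0 < (A * conj a).re) (hBb : 0 < (B * conj b).re)
    (hx : 0 ≤ (⟪A • e - x, x - a • e⟫_ℂ).re) (hy : 0 ≤ (⟪B • e - y, y - b • e⟫_ℂ).re) :
    ‖⟪x, y⟫_ℂ - ⟪x, e⟫_ℂ * ⟪e, y⟫_ℂ‖ ≤
      (1 / 4) * (‖A - a‖ * ‖B - b‖ /
        Real.sqrt ((A * conj a).re * (B * conj b).re)) *
        ‖⟪x, e⟫_ℂ * ⟪e, y⟫_ℂ‖ := by
  calc ‖⟪x, y⟫_ℂ - ⟪x, e⟫_ℂ * ⟪e, y⟫_ℂ‖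
      = ‖⟪x - ⟪e, x⟫_ℂ • e, y - ⟪e, y⟫_ℂ • e⟫_ℂ‖ := by
        rw [inner_sub_inner_smul_of_norm_eq_one he]
    _ ≤ ‖x - ⟪e, x⟫_ℂ • e‖ * ‖y - ⟪e, y⟫_ℂ • e‖ := norm_inner_le_norm _ _
    _ ≤ (‖A - a‖ / (2 * √(A * conj a).re) * ‖⟪x, e⟫_ℂ‖) *
          (‖B - b‖ / (2 * √(B * conj b).re) * ‖⟪y, e⟫_ℂ‖) :=
        mul_le_mul (norm_sub_inner_smul_le he hAa hx) (norm_sub_inner_smul_le he hBb hy)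
          (norm_nonneg _) (by positivity)
    _ = _ := by
        rw [Real.sqrt_mul hAa.le, norm_mul, norm_inner_symm e y]
        field_simp
        ring
end

section
/- Let H be a Hilbert space over ℝ or ℂ, (eᵢ)_{i∈ℕ} an orthonormal sequence in H, λ = (λᵢ) ∈ ℓ², and r > 0 with ∑|λᵢ|² > r². If x ∈ H satisfies ‖x − ∑λᵢeᵢ‖ ≤ r, then ‖x‖² ≤ (∑ Re[conj(λᵢ)⟨x,eᵢ⟩])² / (∑|λᵢ|² − r²). -/
open scoped InnerProductSpace ComplexConjugate

theorem stmt_16 {𝕜 E : Type*} [RCLike 𝕜] [NormedAddCommGroup E] [InnerProductSpace 𝕜 E]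
    [CompleteSpace E] (e : ℕ → E) (he : Orthonormal 𝕜 e) (l : ℕ → 𝕜)
    (hl : Summable fun i => ‖l i‖ ^ 2) (r : ℝ) (hr : 0 < r)
    (hlr : r ^ 2 < ∑' i, ‖l i‖ ^ 2) (s : E) (hs : HasSum (fun i => l i • e i) s)
    (x : E) (hx : ‖x - s‖ ≤ r) :
    ‖x‖ ^ 2 ≤ (∑' i, RCLike.re (conj (l i) * ⟪e i, x⟫_𝕜)) ^ 2 /
      ((∑' i, ‖l i‖ ^ 2) - r ^ 2) := by
  -- inner products with s
  have hinner : ∀ y : E, HasSum (fun i => l i * ⟪y, e i⟫_𝕜) ⟪y, s⟫_𝕜 := by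
    intro y
    have := hs.mapL (innerSL 𝕜 y)
    simpa [inner_smul_right] using this
  -- ⟪e j, s⟫ = l j
  have hes : ∀ j, ⟪e j, s⟫_𝕜 = l j := by
    intro j
    have h1 := hs.mapL (innerSL 𝕜 (e j))
    have h2 : HasSum (fun i => if i = j then l j else 0) (l j) := hasSum_ite_eq j (l j)
    have heq : (fun i => (innerSL 𝕜 (e j)) (l i • e i)) = fun i => if i = j then l j else 0 := by
      funext i
      have horth := (orthonormal_iff_ite.mp he) j i
      simp only [innerSL_apply_apply, inner_smul_right, horth]
      split_ifs with h1' h2' h3'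
      · rw [h1', mul_one]
      · exact absurd h1'.symm h2'
      · exact absurd h3'.symm h1'
      · ring
    rw [heq] at h1
    exact h1.unique h2
  -- ‖s‖² = ∑ ‖l i‖²
  have hnorm_s : ‖s‖ ^ 2 = ∑' i, ‖l i‖ ^ 2 := by
    have h1 := (hinner s).mapL (RCLike.reCLM (K := 𝕜))
    have heq : (fun i => RCLike.reCLM (l i * ⟪s, e i⟫_𝕜)) = fun i => ‖l i‖ ^ 2 := by
      funext i
      have : ⟪s, e i⟫_𝕜 = conj (l i) := by rw [← inner_conj_symm, hes]
      rw [this]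
      simp only [RCLike.reCLM_apply, RCLike.mul_conj]
      rw [← RCLike.ofReal_pow]
      exact RCLike.ofReal_re _
    rw [heq] at h1
    have h2 := h1.tsum_eq
    rw [h2, RCLike.reCLM_apply]
    exact (inner_self_eq_norm_sq s).symm
  -- the sum S equals re ⟪x, s⟫
  have hS : (∑' i, RCLike.re (conj (l i) * ⟪e i, x⟫_𝕜)) = RCLike.re ⟪x, s⟫_𝕜 := by
    have h1 := (hinner x).mapL (RCLike.reCLM (K := 𝕜))
    have heq : (fun i => RCLike.reCLM (l i * ⟪x, e i⟫_𝕜))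
        = fun i => RCLike.re (conj (l i) * ⟪e i, x⟫_𝕜) := by
      funext i
      have : conj (l i) * ⟪e i, x⟫_𝕜 = conj (l i * ⟪x, e i⟫_𝕜) := by
        rw [map_mul, inner_conj_symm]
      rw [RCLike.reCLM_apply, this, RCLike.conj_re]
    rw [heq] at h1
    exact h1.tsum_eq
  set S := RCLike.re ⟪x, s⟫_𝕜 with hSdef
  rw [hS]
  have hexp : ‖x - s‖ ^ 2 = ‖x‖ ^ 2 - 2 * S + ‖s‖ ^ 2 := norm_sub_sq (𝕜 := 𝕜) x s
  have hle : ‖x‖ ^ 2 - 2 * S + (∑' i, ‖l i‖ ^ 2) ≤ r ^ 2 := by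
    have h2 : ‖x - s‖ ^ 2 ≤ r ^ 2 := by
      apply sq_le_sq' <;> nlinarith [norm_nonneg (x - s)]
    rw [hexp, hnorm_s] at h2
    exact h2
  have hA : 0 < (∑' i, ‖l i‖ ^ 2) - r ^ 2 := by linarith
  rw [le_div_iff₀ hA]
  have hxnn : 0 ≤ ‖x‖ ^ 2 := sq_nonneg _
  nlinarith [sq_nonneg (‖x‖ ^ 2 - ((∑' i, ‖l i‖ ^ 2) - r ^ 2)), sq_nonneg (2 * S - ‖x‖ ^ 2 - ((∑' i, ‖l i‖ ^ 2) - r ^ 2))]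
end

section
/- Let H be a Hilbert space, (eᵢ)_{i∈ℕ} an orthonormal sequence, (λᵢ) ∈ ℓ², r > 0 with ∑|λᵢ|² > r², and x ∈ H with ‖x − ∑λᵢeᵢ‖ ≤ r. Then 0 ≤ ‖x‖² − ∑|⟨x,eᵢ⟩|² ≤ (r² / (∑|λᵢ|² − r²))·∑|⟨x,eᵢ⟩|². -/
open scoped InnerProductSpace ComplexConjugate

/-!
Let `y = ∑ ⟪eᵢ, x⟫ eᵢ`. Then `x - y` is orthogonal to every series `z = ∑ cᵢ eᵢ`, so
`‖x - z‖² = ‖x - y‖² + ‖y - z‖²`; with `z = 0` this identifies the Bessel defect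
`‖x‖² - ∑ |⟪x, eᵢ⟫|²` with `‖x - y‖²`, and with `z = s` it gives `‖x - y‖² + ‖y - s‖² ≤ r²`.
Since `‖y‖ ≥ ‖s‖ - ‖y - s‖`, the claim reduces to a real inequality which, after clearing
denominators, is `(r² - ‖y - s‖ ‖s‖)² ≥ 0`.
-/

section InnerProductSpace

variable {ι 𝕜 E : Type*} [RCLike 𝕜] [NormedAddCommGroup E] [InnerProductSpace 𝕜 E]
  {e : ι → E} {c : ι → 𝕜} {z : E}

theorem inner_eq_zero_of_hasSum_smul {w : E} (hw : ∀ i, ⟪w, e i⟫_𝕜 = 0)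
    (hz : HasSum (fun i => c i • e i) z) : ⟪w, z⟫_𝕜 = 0 := by
  have h := (innerSL 𝕜 w).hasSum hz
  simp only [innerSL_apply_apply, inner_smul_right, hw, mul_zero] at h
  exact h.unique hasSum_zero

namespace Orthonormal

theorem inner_left_eq_of_hasSum (he : Orthonormal 𝕜 e) (hz : HasSum (fun i => c i • e i) z)
    (i : ι) : ⟪e i, z⟫_𝕜 = c i := by
  classical
  have h := (innerSL 𝕜 (e i)).hasSum hz
  simp only [innerSL_apply_apply, inner_smul_right, orthonormal_iff_ite.1 he, mul_ite, mul_one,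
    mul_zero] at h
  simpa using h.unique (hasSum_single i fun j hj => if_neg hj.symm)

theorem norm_sq_eq_tsum_of_hasSum (he : Orthonormal 𝕜 e) (hz : HasSum (fun i => c i • e i) z) :
    ‖z‖ ^ 2 = ∑' i, ‖c i‖ ^ 2 := by
  have hsum : ∀ s : Finset ι, ‖∑ i ∈ s, c i • e i‖ ^ 2 = ∑ i ∈ s, ‖c i‖ ^ 2 := fun s => by
    simpa using he.orthogonalFamily.norm_sum c s
  have h : Filter.Tendsto (fun s : Finset ι => ‖∑ i ∈ s, c i • e i‖ ^ 2) Filter.atTop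
      (nhds (‖z‖ ^ 2)) := ((continuous_norm.pow 2).tendsto z).comp hz
  simp only [hsum] at h
  exact (show HasSum (fun i => ‖c i‖ ^ 2) (‖z‖ ^ 2) from h).tsum_eq.symm

theorem hasSum_inner_smul [CompleteSpace E] (he : Orthonormal 𝕜 e) (x : E) :
    HasSum (fun i => ⟪e i, x⟫_𝕜 • e i) (∑' i, ⟪e i, x⟫_𝕜 • e i) := by
  have h := (he.orthogonalFamily.summable_iff_norm_sq_summable fun i => ⟪e i, x⟫_𝕜).2
    (he.inner_products_summable x)
  exact Summable.hasSum (by simpa using h)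

theorem inner_sub_tsum_inner_smul [CompleteSpace E] (he : Orthonormal 𝕜 e) (x : E) (i : ι) :
    ⟪x - ∑' j, ⟪e j, x⟫_𝕜 • e j, e i⟫_𝕜 = 0 := by
  rw [← inner_conj_symm, inner_sub_right, he.inner_left_eq_of_hasSum (he.hasSum_inner_smul x),
    sub_self, map_zero]

theorem norm_sub_sq_eq_add [CompleteSpace E] (he : Orthonormal 𝕜 e) (x : E)
    (hz : HasSum (fun i => c i • e i) z) :
    ‖x - z‖ ^ 2 = ‖x - ∑' i, ⟪e i, x⟫_𝕜 • e i‖ ^ 2 + ‖∑' i, ⟪e i, x⟫_𝕜 • e i - z‖ ^ 2 := by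
  set y := ∑' i, ⟪e i, x⟫_𝕜 • e i
  have hyz : HasSum (fun i => (⟪e i, x⟫_𝕜 - c i) • e i) (y - z) := by
    simpa only [sub_smul] using (he.hasSum_inner_smul x).sub hz
  have horth : ⟪x - y, y - z⟫_𝕜 = 0 :=
    inner_eq_zero_of_hasSum_smul (he.inner_sub_tsum_inner_smul x) hyz
  rw [← sub_add_sub_cancel x y z, sq, sq, sq]
  exact norm_add_sq_eq_norm_sq_add_norm_sq_of_inner_eq_zero _ _ horth

theorem norm_sq_tsum_inner_smul [CompleteSpace E] (he : Orthonormal 𝕜 e) (x : E) :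
    ‖∑' i, ⟪e i, x⟫_𝕜 • e i‖ ^ 2 = ∑' i, ‖⟪x, e i⟫_𝕜‖ ^ 2 := by
  simpa only [norm_inner_symm (e _) x] using he.norm_sq_eq_tsum_of_hasSum (he.hasSum_inner_smul x)

theorem norm_sq_sub_tsum_inner_sq [CompleteSpace E] (he : Orthonormal 𝕜 e) (x : E) :
    ‖x‖ ^ 2 - ∑' i, ‖⟪x, e i⟫_𝕜‖ ^ 2 = ‖x - ∑' i, ⟪e i, x⟫_𝕜 • e i‖ ^ 2 := by
  have h0 : HasSum (fun i => (0 : 𝕜) • e i) 0 := by simp [hasSum_zero]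
  rw [← he.norm_sq_tsum_inner_smul, sub_eq_iff_eq_add]
  simpa using he.norm_sub_sq_eq_add x h0

end Orthonormal

end InnerProductSpace

theorem sq_le_div_mul_sq_of_sq_add_sq_le {a b c t r : ℝ} (ht : 0 ≤ t)
    (hacr : a ^ 2 + c ^ 2 ≤ r ^ 2) (hrt : r ^ 2 < t ^ 2) (hb : t - c ≤ b) :
    a ^ 2 ≤ r ^ 2 / (t ^ 2 - r ^ 2) * b ^ 2 := by
  have hct : c ≤ t := by nlinarith
  have htcb : (t - c) ^ 2 ≤ b ^ 2 := pow_le_pow_left₀ (by linarith) hb 2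
  rw [div_mul_eq_mul_div, le_div_iff₀ (by linarith)]
  nlinarith [sq_nonneg (r ^ 2 - c * t)]

theorem stmt_17_general {𝕜 E : Type*} [RCLike 𝕜] [NormedAddCommGroup E] [InnerProductSpace 𝕜 E]
    [CompleteSpace E] (e : ℕ → E) (he : Orthonormal 𝕜 e) (l : ℕ → 𝕜) (r : ℝ)
    (hlr : r ^ 2 < ∑' i, ‖l i‖ ^ 2) (s : E) (hs : HasSum (fun i => l i • e i) s)
    (x : E) (hx : ‖x - s‖ ≤ r) :
    0 ≤ ‖x‖ ^ 2 - ∑' i, ‖⟪x, e i⟫_𝕜‖ ^ 2 ∧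
      ‖x‖ ^ 2 - ∑' i, ‖⟪x, e i⟫_𝕜‖ ^ 2 ≤
        (r ^ 2 / ((∑' i, ‖l i‖ ^ 2) - r ^ 2)) * ∑' i, ‖⟪x, e i⟫_𝕜‖ ^ 2 := by
  set y := ∑' i, ⟪e i, x⟫_𝕜 • e i
  have hrs : r ^ 2 < ‖s‖ ^ 2 := by rwa [he.norm_sq_eq_tsum_of_hasSum hs]
  have hxys : ‖x - y‖ ^ 2 + ‖y - s‖ ^ 2 ≤ r ^ 2 := by
    rw [← he.norm_sub_sq_eq_add x hs]
    exact pow_le_pow_left₀ (norm_nonneg _) hx 2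
  have hys : ‖s‖ - ‖y - s‖ ≤ ‖y‖ := by linarith [norm_sub_norm_le s y, norm_sub_rev y s]
  rw [he.norm_sq_sub_tsum_inner_sq x, ← he.norm_sq_tsum_inner_smul x,
    ← he.norm_sq_eq_tsum_of_hasSum hs]
  exact ⟨by positivity,
    sq_le_div_mul_sq_of_sq_add_sq_le (norm_nonneg _) hxys hrs hys⟩

theorem stmt_17 {𝕜 E : Type*} [RCLike 𝕜] [NormedAddCommGroup E] [InnerProductSpace 𝕜 E]
    [CompleteSpace E] (e : ℕ → E) (he : Orthonormal 𝕜 e) (l : ℕ → 𝕜)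
    (hl : Summable fun i => ‖l i‖ ^ 2) (r : ℝ) (hr : 0 < r)
    (hlr : r ^ 2 < ∑' i, ‖l i‖ ^ 2) (s : E) (hs : HasSum (fun i => l i • e i) s)
    (x : E) (hx : ‖x - s‖ ≤ r) :
    0 ≤ ‖x‖ ^ 2 - ∑' i, ‖⟪x, e i⟫_𝕜‖ ^ 2 ∧
      ‖x‖ ^ 2 - ∑' i, ‖⟪x, e i⟫_𝕜‖ ^ 2 ≤
        (r ^ 2 / ((∑' i, ‖l i‖ ^ 2) - r ^ 2)) * ∑' i, ‖⟪x, e i⟫_𝕜‖ ^ 2 :=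
  stmt_17_general e he l r hlr s hs x hx
end

section
/- Let H be a Hilbert space, (eᵢ)_{i∈ℕ} an orthonormal sequence, and (Γᵢ), (γᵢ) ∈ ℓ²(ℂ) with ∑ Re(Γᵢ·conj(γᵢ)) > 0. If x ∈ H satisfies ‖x − ∑((Γᵢ+γᵢ)/2)eᵢ‖ ≤ (1/2)(∑|Γᵢ − γᵢ|²)^{1/2}, then 0 ≤ ‖x‖² − ∑|⟨x,eᵢ⟩|² ≤ (1/4)·(∑|Γᵢ − γᵢ|² / ∑ Re(Γᵢ·conj(γᵢ)))·∑|⟨x,eᵢ⟩|². -/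
/-!
Write `S = ∑ Re(Γᵢ conj γᵢ)`, `D = ∑ |Γᵢ - γᵢ|²` and `B = ∑ |⟪x, eᵢ⟫|²`. Parseval for `s` and the
parallelogram law `|(Γᵢ + γᵢ)/2|² = Re(Γᵢ conj γᵢ) + |Γᵢ - γᵢ|²/4` give `‖s‖² = S + D/4`, so expanding
`‖x - s‖² ≤ D/4` yields `‖x‖² + S ≤ 2 Re⟪x, s⟫ ≤ 2 √B ‖s‖`, the last step by Cauchy–Schwarz in `ℓ²`.
Squaring, `(‖x‖² + S)² ≤ B (4S + D)`, and as `(‖x‖² + S)² - 4SB = (‖x‖² - S)² + 4S (‖x‖² - B)`,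
this gives `4S (‖x‖² - B) ≤ DB`. The lower bound is Bessel's inequality.
-/

open scoped InnerProductSpace ComplexConjugate

theorem Summable.norm_sub_sq {ι E : Type*} [SeminormedAddCommGroup E] {f g : ι → E}
    (hf : Summable fun i => ‖f i‖ ^ 2) (hg : Summable fun i => ‖g i‖ ^ 2) :
    Summable fun i => ‖f i - g i‖ ^ 2 :=
  .of_nonneg_of_le (fun _ => sq_nonneg _)
    (fun _ => (pow_le_pow_left₀ (norm_nonneg _) (norm_sub_le _ _) 2).trans add_sq_le)
    ((hf.add hg).mul_left 2)

theorem Real.tsum_mul_le_sqrt_mul_sqrt {ι : Type*} {f g : ι → ℝ} (hf : ∀ i, 0 ≤ f i)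
    (hg : ∀ i, 0 ≤ g i) (hf2 : Summable fun i => f i ^ 2) (hg2 : Summable fun i => g i ^ 2) :
    Summable (fun i => f i * g i) ∧
      ∑' i, f i * g i ≤ √(∑' i, f i ^ 2) * √(∑' i, g i ^ 2) := by
  simp only [Real.sqrt_eq_rpow, ← Real.rpow_two] at hf2 hg2 ⊢
  exact summable_and_inner_le_Lp_mul_Lq_tsum_of_nonneg .two_two hf hg hf2 hg2

theorem norm_tsum_mul_le_sqrt_mul_sqrt {ι 𝕜 : Type*} [RCLike 𝕜] {f g : ι → 𝕜}
    (hf : Summable fun i => ‖f i‖ ^ 2) (hg : Summable fun i => ‖g i‖ ^ 2) :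
    ‖∑' i, f i * g i‖ ≤ √(∑' i, ‖f i‖ ^ 2) * √(∑' i, ‖g i‖ ^ 2) := by
  obtain ⟨hfg, hle⟩ :=
    Real.tsum_mul_le_sqrt_mul_sqrt (fun i => norm_nonneg (f i)) (fun i => norm_nonneg (g i)) hf hg
  simp only [← norm_mul] at hfg hle
  exact (norm_tsum_le_tsum_norm hfg).trans hle

section Orthonormal

variable {ι 𝕜 E : Type*} [RCLike 𝕜] [NormedAddCommGroup E] [InnerProductSpace 𝕜 E]
  {e : ι → E} {c : ι → 𝕜} {s : E}

theorem HasSum.mul_inner_of_hasSum_smul (hs : HasSum (fun i => c i • e i) s) (x : E) :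
    HasSum (fun i => c i * ⟪x, e i⟫_𝕜) ⟪x, s⟫_𝕜 := by
  simpa only [innerSL_apply_apply, inner_smul_right] using (innerSL 𝕜 x).hasSum hs

theorem Orthonormal.inner_left_eq_of_hasSum_s18 (he : Orthonormal 𝕜 e)
    (hs : HasSum (fun i => c i • e i) s) (j : ι) : ⟪e j, s⟫_𝕜 = c j := by
  classical
  refine (hs.mul_inner_of_hasSum_smul (e j)).unique ?_
  convert hasSum_ite_eq j (c j) using 2 with i
  rw [orthonormal_iff_ite.mp he j i]
  split_ifs <;> simp_all [eq_comm]

theorem Orthonormal.hasSum_norm_sq_of_hasSum (he : Orthonormal 𝕜 e)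
    (hs : HasSum (fun i => c i • e i) s) : HasSum (fun i => ‖c i‖ ^ 2) (‖s‖ ^ 2) := by
  have hcoeff (i : ι) : ⟪s, e i⟫_𝕜 = conj (c i) := by
    rw [← inner_conj_symm, he.inner_left_eq_of_hasSum_s18 hs]
  have h := RCLike.reCLM.hasSum (hs.mul_inner_of_hasSum_smul s)
  simp only [hcoeff, RCLike.mul_conj] at h
  simpa [inner_self_eq_norm_sq] using h

theorem Orthonormal.norm_inner_le_of_hasSum (he : Orthonormal 𝕜 e)
    (hs : HasSum (fun i => c i • e i) s) (x : E) :
    ‖⟪x, s⟫_𝕜‖ ≤ √(∑' i, ‖⟪x, e i⟫_𝕜‖ ^ 2) * ‖s‖ := by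
  have hc := he.hasSum_norm_sq_of_hasSum hs
  have hx : Summable fun i => ‖⟪x, e i⟫_𝕜‖ ^ 2 := by
    simpa only [norm_inner_symm] using he.inner_products_summable (x := x)
  rw [(hs.mul_inner_of_hasSum_smul x).tsum_eq.symm, mul_comm, ← Real.sqrt_sq (norm_nonneg s),
    ← hc.tsum_eq]
  exact norm_tsum_mul_le_sqrt_mul_sqrt hc.summable hx

end Orthonormal

theorem Complex.norm_add_div_two_sq (z w : ℂ) :
    ‖(z + w) / 2‖ ^ 2 = (z * conj w).re + ‖z - w‖ ^ 2 / 4 := by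
  simp only [Complex.sq_norm, Complex.normSq_apply, Complex.mul_re, Complex.conj_re,
    Complex.conj_im, Complex.sub_re, Complex.sub_im, Complex.div_ofNat_re, Complex.div_ofNat_im,
    Complex.add_re, Complex.add_im]
  ring

theorem sub_le_of_add_sq_le_mul {X B S D : ℝ} (hS : 0 < S) (h : (X + S) ^ 2 ≤ B * (4 * S + D)) :
    X - B ≤ 1 / 4 * (D / S) * B := by
  rw [show 1 / 4 * (D / S) * B = D * B / (4 * S) by ring, le_div_iff₀ (by positivity)]
  nlinarith [sq_nonneg (X - S)]

theorem stmt_18_general {E : Type*} [NormedAddCommGroup E] [InnerProductSpace ℂ E]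
    (e : ℕ → E) (he : Orthonormal ℂ e) (Γ γ : ℕ → ℂ)
    (hΓ : Summable fun i => ‖Γ i‖ ^ 2) (hγ : Summable fun i => ‖γ i‖ ^ 2)
    (hpos : 0 < ∑' i, (Γ i * conj (γ i)).re)
    (s : E) (hs : HasSum (fun i => ((Γ i + γ i) / 2) • e i) s)
    (x : E) (hx : ‖x - s‖ ≤ (1 / 2) * Real.sqrt (∑' i, ‖Γ i - γ i‖ ^ 2)) :
    0 ≤ ‖x‖ ^ 2 - ∑' i, ‖⟪x, e i⟫_ℂ‖ ^ 2 ∧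
      ‖x‖ ^ 2 - ∑' i, ‖⟪x, e i⟫_ℂ‖ ^ 2 ≤
        (1 / 4) * ((∑' i, ‖Γ i - γ i‖ ^ 2) / ∑' i, (Γ i * conj (γ i)).re) *
          ∑' i, ‖⟪x, e i⟫_ℂ‖ ^ 2 := by
  set D := ∑' i, ‖Γ i - γ i‖ ^ 2
  set S := ∑' i, (Γ i * conj (γ i)).re
  set B := ∑' i, ‖⟪x, e i⟫_ℂ‖ ^ 2
  have hBessel : B ≤ ‖x‖ ^ 2 := by
    simpa only [B, norm_inner_symm] using he.tsum_inner_products_le x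
  refine ⟨sub_nonneg.2 hBessel, sub_le_of_add_sq_le_mul hpos ?_⟩
  have hS : S = ‖s‖ ^ 2 - D / 4 := by
    have h := (he.hasSum_norm_sq_of_hasSum hs).sub ((hΓ.norm_sub_sq hγ).hasSum.div_const 4)
    simp only [Complex.norm_add_div_two_sq, add_sub_cancel_right] at h
    exact h.tsum_eq
  have hxs : ‖x - s‖ ^ 2 ≤ D / 4 := by
    calc ‖x - s‖ ^ 2 ≤ (1 / 2 * √D) ^ 2 := pow_le_pow_left₀ (norm_nonneg _) hx 2
      _ = D / 4 := by rw [mul_pow, Real.sq_sqrt (tsum_nonneg fun _ => sq_nonneg _)]; ring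
  have hCS : (⟪x, s⟫_ℂ).re ≤ √B * ‖s‖ :=
    (Complex.re_le_norm _).trans (he.norm_inner_le_of_hasSum hs x)
  have hsum : ‖x‖ ^ 2 + S ≤ 2 * (√B * ‖s‖) := by
    rw [@norm_sub_sq ℂ] at hxs
    simp only [RCLike.re_to_complex] at hxs
    linarith
  calc (‖x‖ ^ 2 + S) ^ 2 ≤ (2 * (√B * ‖s‖)) ^ 2 :=
        pow_le_pow_left₀ (by positivity) hsum 2
    _ = B * (4 * S + D) := by
        rw [mul_pow, mul_pow, Real.sq_sqrt (tsum_nonneg fun _ => sq_nonneg _), hS]; ring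

theorem stmt_18 {E : Type*} [NormedAddCommGroup E] [InnerProductSpace ℂ E]
    [CompleteSpace E] (e : ℕ → E) (he : Orthonormal ℂ e) (Γ γ : ℕ → ℂ)
    (hΓ : Summable fun i => ‖Γ i‖ ^ 2) (hγ : Summable fun i => ‖γ i‖ ^ 2)
    (hpos : 0 < ∑' i, (Γ i * conj (γ i)).re)
    (s : E) (hs : HasSum (fun i => ((Γ i + γ i) / 2) • e i) s)
    (x : E) (hx : ‖x - s‖ ≤ (1 / 2) * Real.sqrt (∑' i, ‖Γ i - γ i‖ ^ 2)) :
    0 ≤ ‖x‖ ^ 2 - ∑' i, ‖⟪x, e i⟫_ℂ‖ ^ 2 ∧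
      ‖x‖ ^ 2 - ∑' i, ‖⟪x, e i⟫_ℂ‖ ^ 2 ≤
        (1 / 4) * ((∑' i, ‖Γ i - γ i‖ ^ 2) / ∑' i, (Γ i * conj (γ i)).re) *
          ∑' i, ‖⟪x, e i⟫_ℂ‖ ^ 2 :=
  stmt_18_general e he Γ γ hΓ hγ hpos s hs x hx
end
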